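/- Let G be a modular graph with at least three vertices. Then Σ_{S ⊆ V(G), |S|=3} d(S)² = ((|V(G)|−2)/4)·\overline{WW}(G) + (1/4)·\widehat{WW}(G). -/

import Mathlib

open Finset SimpleGraph Polynomial

/-- The Steiner distance of a vertex set `S`: the minimum number of edges of a
connected subgraph of `G` whose vertex set contains `S`. -/
noncomputable def steinerDist {V : Type*} (G : SimpleGraph V) (S : Set V) : ℕ :=
  sInf {n | ∃ H : G.Subgraph, H.Connected ∧ S ⊆ H.verts ∧ H.edgeSet.ncard = n}

/-- The Steiner `k`-Wiener index. -/
noncomputable def SW {V : Type*} [Fintype V] [DecidableEq V] (k : ℕ) (G : SimpleGraph V) : ℕ :=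
  ∑ S ∈ Finset.powersetCard k (Finset.univ : Finset V), steinerDist G (S : Set V)

/-- The Steiner `k`-hyper-Wiener index. -/
noncomputable def SWW {V : Type*} [Fintype V] [DecidableEq V] (k : ℕ) (G : SimpleGraph V) : ℝ :=
  (1/2) * ∑ S ∈ Finset.powersetCard k (Finset.univ : Finset V), (steinerDist G (S : Set V) : ℝ)
    + (1/2) * ∑ S ∈ Finset.powersetCard k (Finset.univ : Finset V), (steinerDist G (S : Set V) : ℝ) ^ 2

/-- The Steiner `k`-Hosoya polynomial `∑_{m ≥ 0} d_k(G,m) x^m`, written as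
`∑_{S ⊆ V(G), |S| = k} x^{d(S)}`. -/
noncomputable def SH {V : Type*} [Fintype V] [DecidableEq V] (k : ℕ) (G : SimpleGraph V) :
    Polynomial ℝ :=
  ∑ S ∈ Finset.powersetCard k (Finset.univ : Finset V), Polynomial.X ^ (steinerDist G (S : Set V))

/-- The Wiener index `W(G) = ∑_{{u,v} ⊆ V(G)} d(u,v)` (each unordered pair counted once). -/
noncomputable def wiener {V : Type*} [Fintype V] [DecidableEq V] (G : SimpleGraph V) : ℝ :=
  (∑ p ∈ Finset.univ.offDiag, (G.dist p.1 p.2 : ℝ)) / 2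

/-- `\overline{WW}(G) = ∑_{{u,v} ⊆ V(G)} d(u,v)²`. -/
noncomputable def WWbar {V : Type*} [Fintype V] [DecidableEq V] (G : SimpleGraph V) : ℝ :=
  (∑ p ∈ Finset.univ.offDiag, (G.dist p.1 p.2 : ℝ) ^ 2) / 2

/-- The set of ordered triples of pairwise distinct vertices. -/
def O3 (V : Type*) [Fintype V] [DecidableEq V] : Finset (V × V × V) :=
  Finset.univ.filter fun t => t.1 ≠ t.2.1 ∧ t.1 ≠ t.2.2 ∧ t.2.1 ≠ t.2.2

/-- `\widehat{WW}(G) = ∑_{(u,v,w) ∈ O₃(G)} d(u,v)·d(u,w)`. -/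
noncomputable def WWhat {V : Type*} [Fintype V] [DecidableEq V] (G : SimpleGraph V) : ℝ :=
  ∑ t ∈ O3 V, (G.dist t.1 t.2.1 : ℝ) * (G.dist t.1 t.2.2 : ℝ)

/-- `z` is a median of the triple `u, v, w`: it lies on a shortest `u,v`-path, a shortest
`u,w`-path and a shortest `v,w`-path. -/
def IsMedian {V : Type*} (G : SimpleGraph V) (u v w z : V) : Prop :=
  G.dist u z + G.dist z v = G.dist u v ∧
  G.dist u z + G.dist z w = G.dist u w ∧
  G.dist v z + G.dist z w = G.dist v w

/-- A modular graph: a connected graph in which every triple of vertices has a median. -/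
def IsModular {V : Type*} (G : SimpleGraph V) : Prop :=
  G.Connected ∧ ∀ u v w : V, ∃ z : V, IsMedian G u v w z

/-- The hypercube graph `Q_n` on `Fin n → Bool`: two vertices are adjacent iff they differ
in exactly one coordinate. -/
def hypercubeGraph (n : ℕ) : SimpleGraph (Fin n → Bool) :=
  SimpleGraph.fromRel fun x y => ∃! i, x i ≠ y i

/-- A partial cube: a connected graph isometrically embeddable into a hypercube. -/
def IsPartialCube {V : Type*} (G : SimpleGraph V) : Prop :=
  G.Connected ∧ ∃ (n : ℕ) (f : V → (Fin n → Bool)),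
    ∀ u v : V, (hypercubeGraph n).dist (f u) (f v) = G.dist u v

/-- The Djoković–Winkler relation Θ on (edges viewed as) unordered pairs:
`s(u₁,v₁) Θ s(u₂,v₂)` iff `d(u₁,u₂) + d(v₁,v₂) ≠ d(u₁,v₂) + d(v₁,u₂)`. -/
def theta {V : Type*} (G : SimpleGraph V) (e f : Sym2 V) : Prop :=
  ∃ u₁ v₁ u₂ v₂ : V, e = s(u₁, v₁) ∧ f = s(u₂, v₂) ∧
    G.dist u₁ u₂ + G.dist v₁ v₂ ≠ G.dist u₁ v₂ + G.dist v₁ u₂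

/-- `E` together with the component data `U`, `U'` is the family of Θ-classes of the
partial cube `G`: each `E i` is a Θ-class of edges, the classes are pairwise distinct and
cover the edge set, and `U i`, `U' i` are (the vertex sets of) the two connected components
of `G - E i`. -/
def IsThetaClassSetup {V : Type*} (G : SimpleGraph V) (d : ℕ)
    (E : Fin d → Set (Sym2 V)) (U U' : Fin d → Set V) : Prop :=
  (∀ i, ∃ e ∈ G.edgeSet, E i = {f | f ∈ G.edgeSet ∧ theta G f e}) ∧
  Function.Injective E ∧
  G.edgeSet = ⋃ i, E i ∧
  ∀ i, ∃ c c' : (G.deleteEdges (E i)).ConnectedComponent, c ≠ c' ∧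
    U i = c.supp ∧ U' i = c'.supp ∧
    ∀ b : (G.deleteEdges (E i)).ConnectedComponent, b = c ∨ b = c'

/-! A median `z` of `u, v, w` lies on geodesics between each pair, so the three geodesics from
`z` to `u`, `v`, `w` form a connected subgraph with at most `(d(u,v) + d(u,w) + d(v,w)) / 2`
edges. Conversely, a connected subgraph containing `u, v, w` contains a `v`-`w` path `p` and a
shortest path from `u` to the nearest vertex of `p`, which share no edge; going along them bounds
`d(u,v) + d(u,w) + d(v,w)` by twice its number of edges. So in a modular graph
`2 d({u,v,w}) = d(u,v) + d(u,w) + d(v,w)`. Squaring and summing over the six orderings of each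
3-set, the symmetries of ordered triples collapse the expansion to
`3 ∑ d(u,v)² + 6 ∑ d(u,v) d(u,w)` over ordered triples, and the first sum is `(n - 2)` times the
sum over ordered pairs. -/

namespace Finset

variable {α : Type*} [DecidableEq α]

def distinctTriples (s : Finset α) : Finset (α × α × α) :=
  {t ∈ s ×ˢ s ×ˢ s | t.1 ≠ t.2.1 ∧ t.1 ≠ t.2.2 ∧ t.2.1 ≠ t.2.2}

lemma mem_distinctTriples {s : Finset α} {t : α × α × α} :
    t ∈ s.distinctTriples ↔
      (t.1 ∈ s ∧ t.2.1 ∈ s ∧ t.2.2 ∈ s) ∧ t.1 ≠ t.2.1 ∧ t.1 ≠ t.2.2 ∧ t.2.1 ≠ t.2.2 := by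
  simp [distinctTriples]

lemma mem_distinctTriples_iff_mem_offDiag_erase {s : Finset α} {t : α × α × α} :
    t ∈ s.distinctTriples ↔ t.1 ∈ s ∧ t.2 ∈ (s.erase t.1).offDiag := by
  simp only [mem_distinctTriples, mem_offDiag, mem_erase]
  tauto

lemma distinctTriples_univ [Fintype α] : (univ : Finset α).distinctTriples = O3 α := by
  ext; simp [mem_distinctTriples, O3]

lemma filter_distinctTriples_eq {s S : Finset α} (hS : S ⊆ s) (hS3 : #S = 3) :
    {t ∈ s.distinctTriples | {t.1, t.2.1, t.2.2} = S} = S.distinctTriples := by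
  ext t
  simp only [mem_filter, mem_distinctTriples]
  constructor
  · rintro ⟨⟨-, hne⟩, rfl⟩
    exact ⟨by simp, hne⟩
  · rintro ⟨⟨h1, h2, h3⟩, hne⟩
    refine ⟨⟨⟨hS h1, hS h2, hS h3⟩, hne⟩, eq_of_subset_of_card_le ?_ ?_⟩
    · simp [insert_subset_iff, h1, h2, h3]
    · rw [hS3, card_eq_three.mpr ⟨_, _, _, hne.1, hne.2.1, hne.2.2, rfl⟩]

section AddCommMonoid

variable {M : Type*} [AddCommMonoid M]

lemma sum_offDiag_fst (s : Finset α) (f : α → M) :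
    ∑ p ∈ s.offDiag, f p.1 = (#s - 1) • ∑ a ∈ s, f a := by
  rw [sum_finset_product' _ s (fun a => s.erase a) (fun _ => by simp [and_comm, ne_comm])
    (f := fun a _ => f a), smul_sum]
  exact sum_congr rfl fun a ha => by rw [sum_const, card_erase_of_mem ha]

lemma sum_distinctTriples_fst_snd (s : Finset α) (f : α → α → M) :
    ∑ t ∈ s.distinctTriples, f t.1 t.2.1 = (#s - 2) • ∑ p ∈ s.offDiag, f p.1 p.2 := by
  rw [sum_finset_product' _ s (fun a => (s.erase a).offDiag)
      (fun _ => mem_distinctTriples_iff_mem_offDiag_erase) (f := fun a q => f a q.1),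
    sum_finset_product' _ s (fun a => s.erase a) (fun _ => by simp [and_comm, ne_comm]),
    smul_sum]
  refine sum_congr rfl fun a ha => ?_
  rw [sum_offDiag_fst, card_erase_of_mem ha, Nat.sub_sub]

lemma card_distinctTriples (s : Finset α) :
    #s.distinctTriples = (#s - 2) * (#s * #s - #s) := by
  rw [← offDiag_card, card_eq_sum_ones s.distinctTriples, card_eq_sum_ones s.offDiag,
    ← smul_eq_mul]
  exact sum_distinctTriples_fst_snd s fun _ _ => 1

lemma sum_distinctTriples_swap_fst_snd (s : Finset α) (f : α × α × α → M) :
    ∑ t ∈ s.distinctTriples, f (t.2.1, t.1, t.2.2) = ∑ t ∈ s.distinctTriples, f t :=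
  sum_nbij' (fun t => (t.2.1, t.1, t.2.2)) (fun t => (t.2.1, t.1, t.2.2))
    (fun _ => by simp only [mem_distinctTriples]; tauto)
    (fun _ => by simp only [mem_distinctTriples]; tauto)
    (fun _ _ => rfl) (fun _ _ => rfl) (fun _ _ => rfl)

lemma sum_distinctTriples_swap_snd_thd (s : Finset α) (f : α × α × α → M) :
    ∑ t ∈ s.distinctTriples, f (t.1, t.2.2, t.2.1) = ∑ t ∈ s.distinctTriples, f t :=
  sum_nbij' (fun t => (t.1, t.2.2, t.2.1)) (fun t => (t.1, t.2.2, t.2.1))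
    (fun _ => by simp only [mem_distinctTriples]; tauto)
    (fun _ => by simp only [mem_distinctTriples]; tauto)
    (fun _ _ => rfl) (fun _ _ => rfl) (fun _ _ => rfl)

lemma sum_distinctTriples_eq_smul_sum_powersetCard (s : Finset α) (f : Finset α → M) :
    ∑ t ∈ s.distinctTriples, f {t.1, t.2.1, t.2.2} = 6 • ∑ S ∈ s.powersetCard 3, f S := by
  have hmaps : ∀ t ∈ s.distinctTriples, {t.1, t.2.1, t.2.2} ∈ s.powersetCard 3 := by
    intro t ht
    obtain ⟨⟨h1, h2, h3⟩, hne⟩ := mem_distinctTriples.mp ht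
    exact mem_powersetCard.mpr ⟨by simp [insert_subset_iff, h1, h2, h3],
      card_eq_three.mpr ⟨_, _, _, hne.1, hne.2.1, hne.2.2, rfl⟩⟩
  rw [← sum_fiberwise_of_maps_to hmaps, smul_sum]
  refine sum_congr rfl fun S hS => ?_
  obtain ⟨hSs, hS3⟩ := mem_powersetCard.mp hS
  rw [sum_congr rfl fun t ht => congrArg f (mem_filter.mp ht).2, sum_const,
    filter_distinctTriples_eq hSs hS3, card_distinctTriples, hS3]

end AddCommMonoid

lemma sum_distinctTriples_sq_add_add {R : Type*} [CommSemiring R] (s : Finset α) (d : α → α → R)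
    (hd : ∀ a b, d a b = d b a) :
    ∑ t ∈ s.distinctTriples, (d t.1 t.2.1 + d t.1 t.2.2 + d t.2.1 t.2.2) ^ 2
      = 3 * ∑ t ∈ s.distinctTriples, d t.1 t.2.1 ^ 2
        + 6 * ∑ t ∈ s.distinctTriples, d t.1 t.2.1 * d t.1 t.2.2 := by
  set T := s.distinctTriples
  have hsq₂ : ∑ t ∈ T, d t.1 t.2.2 ^ 2 = ∑ t ∈ T, d t.1 t.2.1 ^ 2 :=
    sum_distinctTriples_swap_snd_thd s fun t => d t.1 t.2.1 ^ 2
  have hsq₃ : ∑ t ∈ T, d t.2.1 t.2.2 ^ 2 = ∑ t ∈ T, d t.1 t.2.2 ^ 2 :=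
    sum_distinctTriples_swap_fst_snd s fun t => d t.1 t.2.2 ^ 2
  have hprod₂ : ∑ t ∈ T, d t.1 t.2.1 * d t.2.1 t.2.2 = ∑ t ∈ T, d t.1 t.2.1 * d t.1 t.2.2 := by
    rw [← sum_distinctTriples_swap_fst_snd s]
    exact sum_congr rfl fun t _ => by rw [hd t.2.1 t.1]
  have hprod₃ : ∑ t ∈ T, d t.1 t.2.2 * d t.2.1 t.2.2 = ∑ t ∈ T, d t.1 t.2.1 * d t.2.1 t.2.2 := by
    rw [← sum_distinctTriples_swap_snd_thd s]
    exact sum_congr rfl fun t _ => by rw [hd t.2.1 t.2.2]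
  calc _ = ∑ t ∈ T, (d t.1 t.2.1 ^ 2 + d t.1 t.2.2 ^ 2 + d t.2.1 t.2.2 ^ 2
          + 2 * (d t.1 t.2.1 * d t.1 t.2.2) + 2 * (d t.1 t.2.1 * d t.2.1 t.2.2)
          + 2 * (d t.1 t.2.2 * d t.2.1 t.2.2)) := sum_congr rfl fun _ _ => by ring
    _ = _ := by
      simp only [sum_add_distrib, ← mul_sum]
      rw [hsq₃, hsq₂, hprod₃, hprod₂]
      ring

end Finset

namespace SimpleGraph

variable {V : Type*} {G : SimpleGraph V}

lemma Walk.ncard_edgeSet_le_length {u v : V} (p : G.Walk u v) : p.edgeSet.ncard ≤ p.length := by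
  classical
  rw [Walk.edgeSet, ← List.coe_toFinset, Set.ncard_coe_finset, ← Walk.length_edges]
  exact List.toFinset_card_le _

lemma Walk.edges_disjoint_of_forall_mem_support {a b c d x : V} (r : G.Walk a b) (p : G.Walk c d)
    (h : ∀ y ∈ r.support, y ∈ p.support → y = x) : r.edges.Disjoint p.edges := by
  intro e hr hp
  induction e using Sym2.ind with
  | _ y z =>
    have hy := h y (r.fst_mem_support_of_mem_edges hr) (p.fst_mem_support_of_mem_edges hp)
    have hz := h z (r.snd_mem_support_of_mem_edges hr) (p.snd_mem_support_of_mem_edges hp)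
    exact (r.adj_of_mem_edges hr).ne (hy.trans hz.symm)

lemma Walk.IsTrail.length_add_length_le_ncard_edgeSet [Finite G.edgeSet] {a b c d : V}
    {r : G.Walk a b} {p : G.Walk c d} (hr : r.IsTrail) (hp : p.IsTrail)
    (hrp : r.edges.Disjoint p.edges) : r.length + p.length ≤ G.edgeSet.ncard := by
  classical
  have hnodup : (r.edges ++ p.edges).Nodup := hr.edges_nodup.append hp.edges_nodup hrp
  have hsub : ((r.edges ++ p.edges).toFinset : Set (Sym2 V)) ⊆ G.edgeSet := by
    intro e he
    rw [List.coe_toFinset, Set.mem_ofPred_eq, List.mem_append] at he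
    exact he.elim (r.edges_subset_edgeSet ·) (p.edges_subset_edgeSet ·)
  calc r.length + p.length = (r.edges ++ p.edges).toFinset.card := by
        rw [List.toFinset_card_of_nodup hnodup, List.length_append, Walk.length_edges,
          Walk.length_edges]
    _ ≤ G.edgeSet.ncard := by
        rw [← Set.ncard_coe_finset]
        exact Set.ncard_le_ncard hsub

lemma Reachable.dist_add_dist_add_dist_le [Finite G.edgeSet] {u v w : V}
    (huv : G.Reachable u v) (hvw : G.Reachable v w) :
    G.dist u v + G.dist u w + G.dist v w ≤ 2 * G.edgeSet.ncard := by
  classical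
  obtain ⟨p, hp, -⟩ := hvw.exists_path_of_dist
  obtain ⟨x, hx, hmin⟩ := p.support.toFinset.exists_min_image (G.dist u) ⟨v, by simp⟩
  rw [List.mem_toFinset] at hx
  obtain ⟨r, hr, hrlen⟩ := (huv.trans (p.takeUntil x hx).reachable).exists_path_of_dist
  have hmeet : ∀ y ∈ r.support, y ∈ p.support → y = x := by
    intro y hyr hyp
    by_contra hne
    have hsplit : (r.takeUntil y hyr).length + (r.dropUntil y hyr).length = r.length := by
      rw [← Walk.length_append, Walk.take_spec]
    have hdrop : (r.dropUntil y hyr).length ≠ 0 := fun h => hne (Walk.eq_of_length_eq_zero h)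
    have := dist_le (r.takeUntil y hyr)
    have := hmin y (List.mem_toFinset.mpr hyp)
    omega
  have hcount := hr.isTrail.length_add_length_le_ncard_edgeSet hp.isTrail
    (r.edges_disjoint_of_forall_mem_support p hmeet)
  have hsplit : (p.takeUntil x hx).length + (p.dropUntil x hx).length = p.length := by
    rw [← Walk.length_append, Walk.take_spec]
  have huv' : G.dist u v ≤ r.length + (p.takeUntil x hx).length := by
    simpa using dist_le (r.append (p.takeUntil x hx).reverse)
  have huw' : G.dist u w ≤ r.length + (p.dropUntil x hx).length := by
    simpa using dist_le (r.append (p.dropUntil x hx))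
  have hvw' := dist_le p
  omega

lemma Subgraph.Connected.dist_add_dist_add_dist_le [Finite V] {H : G.Subgraph} (hH : H.Connected)
    {u v w : V} (hu : u ∈ H.verts) (hv : v ∈ H.verts) (hw : w ∈ H.verts) :
    G.dist u v + G.dist u w + G.dist v w ≤ 2 * H.edgeSet.ncard := by
  have hreach : ∀ a b, a ∈ H.verts → b ∈ H.verts → H.spanningCoe.Reachable a b :=
    fun a b ha hb => (hH ⟨a, ha⟩ ⟨b, hb⟩).map H.coeEmbeddingSpanningCoe.toHom
  have hle := H.spanningCoe_le
  have := (hreach u v hu hv).dist_anti hle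
  have := (hreach u w hu hw).dist_anti hle
  have := (hreach v w hv hw).dist_anti hle
  have := (hreach u v hu hv).dist_add_dist_add_dist_le (hreach v w hv hw)
  rw [Subgraph.edgeSet_spanningCoe] at this
  omega

lemma exists_connected_subgraph_ncard_edgeSet_le (hG : G.Connected) (z u v w : V) :
    ∃ H : G.Subgraph, H.Connected ∧ {u, v, w} ⊆ H.verts ∧
      H.edgeSet.ncard ≤ G.dist z u + G.dist z v + G.dist z w := by
  obtain ⟨p, hp⟩ := hG.exists_walk_length_eq_dist z u
  obtain ⟨q, hq⟩ := hG.exists_walk_length_eq_dist z v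
  obtain ⟨r, hr⟩ := hG.exists_walk_length_eq_dist z w
  refine ⟨p.toSubgraph ⊔ q.toSubgraph ⊔ r.toSubgraph, ?_, ?_, ?_⟩
  · refine Subgraph.connected_sup (Subgraph.connected_sup p.toSubgraph_connected.preconnected
      q.toSubgraph_connected.preconnected ⟨z, by simp⟩).preconnected
      r.toSubgraph_connected.preconnected ⟨z, by simp⟩
  · simp [Set.insert_subset_iff]
  · rw [Subgraph.edgeSet_sup, Subgraph.edgeSet_sup, Walk.edgeSet_toSubgraph,
      Walk.edgeSet_toSubgraph, Walk.edgeSet_toSubgraph, ← hp, ← hq, ← hr]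
    refine (Set.ncard_union_le _ _).trans (add_le_add ((Set.ncard_union_le _ _).trans ?_) ?_)
    · exact add_le_add p.ncard_edgeSet_le_length q.ncard_edgeSet_le_length
    · exact r.ncard_edgeSet_le_length

end SimpleGraph

section Steiner

variable {V : Type*} {G : SimpleGraph V}

lemma steinerDist_le_ncard {S : Set V} {H : G.Subgraph} (hH : H.Connected) (hS : S ⊆ H.verts) :
    steinerDist G S ≤ H.edgeSet.ncard :=
  Nat.sInf_le ⟨H, hH, hS, rfl⟩

lemma exists_ncard_edgeSet_eq_steinerDist {S : Set V}
    (h : ∃ H : G.Subgraph, H.Connected ∧ S ⊆ H.verts) :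
    ∃ H : G.Subgraph, H.Connected ∧ S ⊆ H.verts ∧ H.edgeSet.ncard = steinerDist G S := by
  obtain ⟨H, hH, hS⟩ := h
  exact Nat.sInf_mem (s := {n | ∃ H : G.Subgraph, H.Connected ∧ S ⊆ H.verts ∧ H.edgeSet.ncard = n})
    ⟨_, H, hH, hS, rfl⟩

lemma steinerDist_triple_le (hG : G.Connected) (z u v w : V) :
    steinerDist G {u, v, w} ≤ G.dist z u + G.dist z v + G.dist z w := by
  obtain ⟨H, hH, hS, hcard⟩ := exists_connected_subgraph_ncard_edgeSet_le hG z u v w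
  exact (steinerDist_le_ncard hH hS).trans hcard

lemma dist_add_dist_add_dist_le_two_mul_steinerDist [Finite V] (hG : G.Connected) (u v w : V) :
    G.dist u v + G.dist u w + G.dist v w ≤ 2 * steinerDist G {u, v, w} := by
  obtain ⟨H₀, hH₀, hS₀, -⟩ := exists_connected_subgraph_ncard_edgeSet_le hG u u v w
  obtain ⟨H, hH, hS, hcard⟩ := exists_ncard_edgeSet_eq_steinerDist ⟨H₀, hH₀, hS₀⟩
  obtain ⟨hu, hv, hw⟩ : u ∈ H.verts ∧ v ∈ H.verts ∧ w ∈ H.verts := by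
    simpa [Set.insert_subset_iff] using hS
  exact hcard ▸ hH.dist_add_dist_add_dist_le hu hv hw

lemma IsModular.two_mul_steinerDist_triple [Finite V] (hG : IsModular G) (u v w : V) :
    2 * steinerDist G {u, v, w} = G.dist u v + G.dist u w + G.dist v w := by
  obtain ⟨z, huv, huw, hvw⟩ := hG.2 u v w
  have := steinerDist_triple_le hG.1 z u v w
  have := dist_add_dist_add_dist_le_two_mul_steinerDist hG.1 u v w
  rw [dist_comm (u := z) (v := u), dist_comm (u := z) (v := v), dist_comm (u := z) (v := w)]
    at *
  omega

end Steiner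

/-- For a modular graph `G` with at least three vertices,
`∑_{S ⊆ V(G), |S|=3} d(S)² = ((|V|-2)/4)·\overline{WW}(G) + (1/4)·\widehat{WW}(G)`. -/
theorem sum_sq_steiner_dist_modular
    {V : Type*} [Fintype V] [DecidableEq V] (G : SimpleGraph V)
    (hG : IsModular G) (hV : 3 ≤ Fintype.card V) :
    ∑ S ∈ Finset.powersetCard 3 (Finset.univ : Finset V), (steinerDist G (S : Set V) : ℝ) ^ 2
      = ((Fintype.card V : ℝ) - 2) / 4 * WWbar G + 1 / 4 * WWhat G := by
  set d : V → V → ℝ := fun a b => G.dist a b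
  have hsteiner : ∀ t : V × V × V, (steinerDist G ({t.1, t.2.1, t.2.2} : Finset V) : ℝ) ^ 2
      = (d t.1 t.2.1 + d t.1 t.2.2 + d t.2.1 t.2.2) ^ 2 / 4 := fun t => by
    have := congrArg (Nat.cast (R := ℝ)) (hG.two_mul_steinerDist_triple t.1 t.2.1 t.2.2)
    push_cast at this ⊢
    rw [← this]
    ring
  have hd : ∀ a b, d a b = d b a := fun a b => by simp only [d, dist_comm]
  have hsum := sum_distinctTriples_eq_smul_sum_powersetCard (univ : Finset V)
    fun S => (steinerDist G (S : Set V) : ℝ) ^ 2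
  rw [sum_congr rfl fun t _ => hsteiner t, ← sum_div, sum_distinctTriples_sq_add_add _ d hd,
    sum_distinctTriples_fst_snd _ fun a b => d a b ^ 2, distinctTriples_univ, card_univ,
    nsmul_eq_mul, nsmul_eq_mul, Nat.cast_sub (by omega)] at hsum
  rw [WWbar, WWhat]
  push_cast at hsum
  linarith
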